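/- For s ≥ t ≥ 2, let G = P_s □ P_t be the grid graph, the Cartesian product of the path on s vertices and the path on t vertices. Then cdim(G) = t. -/

import Mathlib

open SimpleGraph

variable {V : Type*}

/-- `S` is a resolving set of `G`. -/
def IsResolving (G : SimpleGraph V) (S : Set V) : Prop :=
  ∀ x y : V, x ≠ y → ∃ z ∈ S, G.dist z x ≠ G.dist z y

/-- `S` is a connected resolving set of `G`. -/
def IsConnResolving (G : SimpleGraph V) (S : Set V) : Prop :=
  IsResolving G S ∧ (G.induce S).Connected

/-- The metric dimension of `G`. -/
noncomputable def metricDim (G : SimpleGraph V) : ℕ :=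
  sInf {n | ∃ S : Set V, IsResolving G S ∧ S.ncard = n}

/-- The connected metric dimension of `G`. -/
noncomputable def cdim (G : SimpleGraph V) : ℕ :=
  sInf {n | ∃ S : Set V, IsConnResolving G S ∧ S.ncard = n}

/-- The connected metric dimension of `G` at a vertex `v`. -/
noncomputable def cdimAt (G : SimpleGraph V) (v : V) : ℕ :=
  sInf {n | ∃ S : Set V, IsConnResolving G S ∧ v ∈ S ∧ S.ncard = n}

/-!
A column `{0} × P_t` is a connected resolving set of size `t`: its two end vertices already
resolve the grid, since the grid distance is the sum of the coordinate distances. Conversely, a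
connected set of fewer than `t ≤ s` vertices has diameter at most `t - 2`, so its bounding box
leaves room on one side in each coordinate. At the corresponding corner `(a, b)` of the box, with
`a'`, `b'` the neighbouring outside values, the vertices `(a, b')` and `(a', b)` are at the same
distance from every vertex of the set, so the set does not resolve the grid.
-/

namespace SimpleGraph

variable {V W : Type*} {G : SimpleGraph V}

lemma Preconnected.dist_boxProd {H : SimpleGraph W} (hG : G.Preconnected) (hH : H.Preconnected)
    (x y : V × W) : (G □ H).dist x y = G.dist x.1 y.1 + H.dist x.2 y.2 := by
  have h := edist_boxProd (G := G) (H := H) x y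
  rw [← (hG _ _).coe_dist_eq_edist, ← (hH _ _).coe_dist_eq_edist,
    ← ((hG.boxProd hH) x y).coe_dist_eq_edist] at h
  exact_mod_cast h

lemma Connected.induce_range {H : SimpleGraph W} (f : H →g G) (hH : H.Connected) :
    (G.induce (Set.range f)).Connected :=
  hH.map ⟨fun w => ⟨f w, w, rfl⟩, fun h => f.map_rel h⟩ (by rintro ⟨_, w, rfl⟩; exact ⟨w, rfl⟩)

lemma dist_lt_ncard_of_connected_induce {S : Set V} (hS : S.Finite)
    (hconn : (G.induce S).Connected) {p q : V} (hp : p ∈ S) (hq : q ∈ S) :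
    G.dist p q < S.ncard := by
  classical
  have := hS.fintype
  obtain ⟨w⟩ := hconn.preconnected ⟨p, hp⟩ ⟨q, hq⟩
  calc G.dist p q ≤ (w.bypass.map (Embedding.induce S).toHom).length := dist_le _
    _ = w.bypass.length := Walk.length_map _ _
    _ < Fintype.card S := w.bypass_isPath.length_lt
    _ = S.ncard := by rw [← Nat.card_eq_fintype_card, Nat.card_coe_set_eq]

lemma pathGraph_natDist_le_length {n : ℕ} {a b : Fin n} (w : (pathGraph n).Walk a b) :
    Nat.dist a b ≤ w.length := by
  induction w with
  | nil => simp
  | @cons a b c h p ih =>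
    have hab : Nat.dist a b = 1 := by
      rcases pathGraph_adj.mp h with h | h <;> simp only [Nat.dist] <;> omega
    calc Nat.dist a c ≤ Nat.dist a b + Nat.dist b c := Nat.dist.triangle_inequality _ _ _
      _ ≤ (Walk.cons h p).length := by rw [Walk.length_cons]; omega

lemma pathGraph_dist_le_natDist {n : ℕ} (a b : Fin n) :
    (pathGraph n).dist a b ≤ Nat.dist a b := by
  wlog hab : a ≤ b generalizing a b
  · rw [dist_comm, Nat.dist_comm]
    exact this b a (le_of_not_ge hab)
  obtain ⟨k, hk⟩ : ∃ k, b.val = a.val + k := ⟨b - a, by omega⟩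
  induction k generalizing b with
  | zero =>
    obtain rfl : a = b := Fin.ext hk.symm
    simp
  | succ k ih =>
    have hc : a.val + k < n := by omega
    set c : Fin n := ⟨a + k, hc⟩
    have hcb : (pathGraph n).Adj c b := pathGraph_adj.mpr (Or.inl (by simp [c, hk]; omega))
    calc (pathGraph n).dist a b ≤ (pathGraph n).dist a c + (pathGraph n).dist c b :=
          (pathGraph_preconnected n c b).dist_triangle_right a
      _ ≤ Nat.dist a c + 1 :=
          add_le_add (ih c (Fin.mk_le_mk.mpr (by omega)) rfl) (dist_eq_one_iff_adj.mpr hcb).le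
      _ = Nat.dist a b := by simp only [Nat.dist, c]; omega

lemma pathGraph_dist {n : ℕ} (a b : Fin n) : (pathGraph n).dist a b = Nat.dist a b := by
  obtain ⟨w, hw⟩ := (pathGraph_preconnected n a b).exists_walk_length_eq_dist
  exact (pathGraph_dist_le_natDist a b).antisymm (hw ▸ pathGraph_natDist_le_length w)

end SimpleGraph

open SimpleGraph

lemma dist_grid {s t : ℕ} (x y : Fin s × Fin t) :
    (pathGraph s □ pathGraph t).dist x y = Nat.dist x.1 y.1 + Nat.dist x.2 y.2 := by
  rw [(pathGraph_preconnected s).dist_boxProd (pathGraph_preconnected t), pathGraph_dist,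
    pathGraph_dist]

lemma isConnResolving_grid_column {s t : ℕ} (hs : 0 < s) (ht : 0 < t) :
    IsConnResolving (pathGraph s □ pathGraph t)
      (Set.range ((pathGraph s).boxProdRight (pathGraph t) ⟨0, hs⟩)) := by
  refine ⟨fun x y hxy => ?_, ?_⟩
  · by_contra! h
    have h0 := h _ ⟨⟨0, ht⟩, rfl⟩
    have h1 := h _ ⟨⟨t - 1, by omega⟩, rfl⟩
    simp only [dist_grid, boxProdRight_apply, Nat.dist] at h0 h1
    have := x.2.isLt
    have := y.2.isLt
    exact hxy (Prod.ext (Fin.ext (by omega)) (Fin.ext (by omega)))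
  · have := pathGraph_connected (t - 1)
    rw [Nat.sub_add_cancel ht] at this
    exact this.induce_range ((pathGraph s).boxProdRight (pathGraph t) ⟨0, hs⟩).toHom

lemma ncard_grid_column {s t : ℕ} (hs : 0 < s) :
    (Set.range ((pathGraph s).boxProdRight (pathGraph t) ⟨0, hs⟩)).ncard = t := by
  rw [Set.ncard_range_of_injective (RelEmbedding.injective _), Nat.card_eq_fintype_card,
    Fintype.card_fin]

lemma Fin.exists_step_away {m : ℕ} {A : Set (Fin m)} (hA : A.Nonempty)
    (hspread : ∀ x ∈ A, ∀ y ∈ A, Nat.dist x y + 2 ≤ m) :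
    ∃ a a' : Fin m, ∀ x ∈ A, Nat.dist x a' = Nat.dist x a + 1 := by
  obtain ⟨M, hM, hmax⟩ := Set.exists_max_image A Fin.val A.toFinite hA
  obtain ⟨μ, hμ, hmin⟩ := Set.exists_min_image A Fin.val A.toFinite hA
  have hMμ := hspread M hM μ hμ
  simp only [Nat.dist] at hMμ
  by_cases hroom : M.val + 1 < m
  · refine ⟨M, ⟨M + 1, hroom⟩, fun x hx => ?_⟩
    have := hmax x hx
    simp only [Nat.dist]
    omega
  · refine ⟨μ, ⟨μ - 1, by omega⟩, fun x hx => ?_⟩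
    have := hmin x hx
    have := hmax x hx
    simp only [Nat.dist]
    omega

lemma le_ncard_of_isConnResolving_grid {s t : ℕ} (hts : t ≤ s) {S : Set (Fin s × Fin t)}
    (hS : IsConnResolving (pathGraph s □ pathGraph t) S) : t ≤ S.ncard := by
  obtain ⟨hres, hconn⟩ := hS
  by_contra! hsmall
  have hne : S.Nonempty := Set.nonempty_coe_sort.mp hconn.nonempty
  have hspread (x) (hx : x ∈ S) (y) (hy : y ∈ S) :
      Nat.dist x.1 y.1 + Nat.dist x.2 y.2 + 2 ≤ t := by
    have := dist_lt_ncard_of_connected_induce S.toFinite hconn hx hy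
    rw [dist_grid] at this
    omega
  obtain ⟨a, a', ha⟩ := Fin.exists_step_away (hne.image Prod.fst) (by
    rintro _ ⟨x, hx, rfl⟩ _ ⟨y, hy, rfl⟩
    have := hspread x hx y hy
    omega)
  obtain ⟨b, b', hb⟩ := Fin.exists_step_away (hne.image Prod.snd) (by
    rintro _ ⟨x, hx, rfl⟩ _ ⟨y, hy, rfl⟩
    have := hspread x hx y hy
    omega)
  have hbb' : b ≠ b' := by
    rintro rfl
    have := hb _ (Set.mem_image_of_mem _ hne.some_mem)
    omega
  obtain ⟨z, hz, hdist⟩ := hres (a, b') (a', b) (fun h => hbb' (congrArg Prod.snd h).symm)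
  have := ha _ (Set.mem_image_of_mem _ hz)
  have := hb _ (Set.mem_image_of_mem _ hz)
  rw [dist_grid, dist_grid] at hdist
  exact hdist (by dsimp only; omega)

/-- For `s ≥ t ≥ 2`, the grid graph `G = P_s □ P_t` satisfies
`cdim(G) = t`. -/
theorem stmt_18 (s t : ℕ) (ht : 2 ≤ t) (hst : t ≤ s) :
    cdim (pathGraph s □ pathGraph t) = t := by
  have hs : 0 < s := by omega
  have hcolumn : t ∈ {n | ∃ S : Set (Fin s × Fin t),
      IsConnResolving (pathGraph s □ pathGraph t) S ∧ S.ncard = n} :=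
    ⟨_, isConnResolving_grid_column hs (by omega), ncard_grid_column hs⟩
  refine (Nat.sInf_le hcolumn).antisymm (le_csInf ⟨t, hcolumn⟩ ?_)
  rintro n ⟨S, hS, rfl⟩
  exact le_ncard_of_isConnResolving_grid hst hS
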